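/- arXiv:2103.16770 — 2 statements merged into one kernel-verified Lean document; each statement's English description precedes it below -/
import Mathlib

section
/- If (Q,·,D,R) is a constellation with range, then with ≤ the natural order and s∘t := s·t when R(s) = D(t) (undefined otherwise), (Q,∘,D,R,≤) is an ordered category with restrictions given by e|s = e·s for e ≤ D(s). Conversely, if (C,∘,D,R,≤) is an ordered category with restrictions, then defining s·t := s∘(R(s)|t) whenever R(s) ≤ D(t) makes (C,·,D,R) a constellation with range whose natural order is ≤. These two constructions are mutually inverse. -/
namespace ConstellationsRange
open Classical

variable {Q : Type*}

/-- An (object-free) constellation: a partial binary operation `mul` (encoded via `Option`)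
with a domain operation `D`, satisfying (Q1)-(Q3). -/
structure Constellation (Q : Type*) where
  mul : Q → Q → Option Q
  D : Q → Q
  /-- (Q1) if `x·(y·z)` exists then `(x·y)·z` exists and the two are equal. -/
  q1 : ∀ x y z yz w, mul y z = some yz → mul x yz = some w →
      ∃ xy, mul x y = some xy ∧ mul xy z = some w
  /-- (Q2) if `x·y` and `y·z` exist then `x·(y·z)` exists. -/
  q2 : ∀ x y z xy yz, mul x y = some xy → mul y z = some yz → (mul x yz).isSome
  /-- `D x` is a right identity. -/
  q3_rid : ∀ x y z, mul y (D x) = some z → z = y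
  /-- `D x · x = x`. -/
  q3_mul : ∀ x, mul (D x) x = some x
  /-- `D x` is the unique right identity `e` with `e·x = x`. -/
  q3_uniq : ∀ x e, (∀ y z, mul y e = some z → z = y) → mul e x = some x → e = D x

/-- The projections of a constellation are the elements of the form `D s`. -/
def IsProj (C : Constellation Q) (e : Q) : Prop := ∃ s, C.D s = e

/-- A pre-range structure: `R s` is the unique smallest projection `e` (w.r.t. the
standard quasiorder `e ≤ f ↔ e·f exists`) such that `s·e` exists. -/
structure PreRange (C : Constellation Q) where
  R : Q → Q
  proj : ∀ s, IsProj C (R s)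
  ex : ∀ s, (C.mul s (R s)).isSome
  min : ∀ s f, IsProj C f → (C.mul s f).isSome → (C.mul (R s) f).isSome
  uniq : ∀ s e, IsProj C e → (C.mul s e).isSome →
      (∀ f, IsProj C f → (C.mul s f).isSome → (C.mul e f).isSome) → e = R s

/-- The natural (quasi)order on a constellation: `s ≤ t` iff `s = D(s)·t`. -/
def natle (C : Constellation Q) (s t : Q) : Prop := C.mul (C.D s) t = some s

/-- The derived partial operation `s∘t := s·t` when `R s = D t`, undefined otherwise. -/
noncomputable def catOf (C : Constellation Q) (R : Q → Q) : Q → Q → Option Q :=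
  fun s t => if R s = C.D t then C.mul s t else none

/-- An object-free category, with domain and range operations. All fields are
standard properties of (object-free) categories. -/
structure PCat (Q : Type*) where
  comp : Q → Q → Option Q
  D : Q → Q
  R : Q → Q
  /-- (C1) `x∘(y∘z)` exists iff `(x∘y)∘z` exists, and then they are equal. -/
  c1 : ∀ x y z, (comp y z).bind (comp x) = (comp x y).bind (fun xy => comp xy z)
  /-- (C2) -/
  c2 : ∀ x y z xy yz, comp x y = some xy → comp y z = some yz → (comp x yz).isSome
  dId : ∀ x, comp (D x) x = some x
  rId : ∀ x, comp x (R x) = some x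
  dL : ∀ x y z, comp (D x) y = some z → z = y
  dR' : ∀ x y z, comp y (D x) = some z → z = y
  rL : ∀ x y z, comp (R x) y = some z → z = y
  rR : ∀ x y z, comp y (R x) = some z → z = y
  /-- The product `x∘y` exists iff `R x = D y`. -/
  defIff : ∀ x y, (comp x y).isSome ↔ R x = D y
  dD : ∀ x, D (D x) = D x
  rD : ∀ x, R (D x) = D x
  dRx : ∀ x, D (R x) = R x
  rRx : ∀ x, R (R x) = R x
  dComp : ∀ x y z, comp x y = some z → D z = D x
  rComp : ∀ x y z, comp x y = some z → R z = R y

/-- Epimorphism in an object-free category: `s∘x = s∘y` implies `x = y`. -/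
def Epi (C : PCat Q) (s : Q) : Prop :=
  ∀ x y w, C.comp s x = some w → C.comp s y = some w → x = y

/-- Monomorphism: `x∘m = y∘m` implies `x = y`. -/
def Mono (C : PCat Q) (m : Q) : Prop :=
  ∀ x y w, C.comp x m = some w → C.comp y m = some w → x = y

/-- Isomorphism. -/
def Iso (C : PCat Q) (a : Q) : Prop :=
  ∃ b, C.comp a b = some (C.D a) ∧ C.comp b a = some (C.D b)

/-- An ordered category with restrictions. -/
structure OrderedCatRes (Q : Type*) extends PCat Q where
  le : Q → Q → Prop
  le_refl : ∀ s, le s s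
  le_antisymm : ∀ s t, le s t → le t s → s = t
  le_trans : ∀ s t u, le s t → le t u → le s u
  /-- (O1) -/
  o1 : ∀ a b c d ac bd, le a b → le c d → comp a c = some ac → comp b d = some bd → le ac bd
  /-- (O2) -/
  o2 : ∀ a b, le a b → le (D a) (D b)
  /-- (O2') -/
  o2' : ∀ a b, le a b → le (R a) (R b)
  /-- the restriction `e|s`, for identities `e ≤ D s`. -/
  rstr : Q → Q → Q
  rstr_le : ∀ e s, D e = e → le e (D s) → le (rstr e s) s
  rstr_dom : ∀ e s, D e = e → le e (D s) → D (rstr e s) = e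
  /-- (O3) uniqueness: `e|s` is the unique `x ≤ s` with `D x = e`. -/
  rstr_uniq : ∀ e s x, D e = e → le e (D s) → le x s → D x = e → x = rstr e s

/-- The constellation product derived from an ordered category with restrictions:
`s·t := s∘(R(s)|t)` whenever `R s ≤ D t`. -/
noncomputable def conOf (O : OrderedCatRes Q) : Q → Q → Option Q :=
  fun s t => if O.le (O.R s) (O.D t) then O.comp s (O.rstr (O.R s) t) else none

/-!
In a constellation with range, `s·t` is defined iff `R s ≤ D t`, and then `s·t = s·(R s·t)`,
where `R s·t` is the restriction of `t` to `R s`. So the product is determined by its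
restriction to pairs with `R s = D t` together with the restrictions `e|t = e·t`. The congruence
condition is what makes `R (s∘t) = R t`, and (O1) is an instance of associativity.
Conversely, in an ordered category with restrictions the derived product is associative because
restriction commutes with it, `e|(y·z) = (e|y)·z`, which follows from (O1) and the uniqueness of
restrictions.
-/

def RangeCongruence (C : Constellation Q) (PR : PreRange C) : Prop :=
  ∀ s t u v, C.mul s t = some u → C.mul (PR.R s) t = some v → PR.R v = PR.R u

/-- `e|s := e·s`, with the junk value `s` where `e·s` is undefined. -/
noncomputable def restrict (C : Constellation Q) (e s : Q) : Q := (C.mul e s).getD s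

theorem catOf_eq_some_iff {C : Constellation Q} {R : Q → Q} {s t u : Q} :
    catOf C R s t = some u ↔ R s = C.D t ∧ C.mul s t = some u := by
  unfold catOf
  split_ifs with h <;> simp [h]

theorem catOf_of_eq {C : Constellation Q} {R : Q → Q} {s t : Q} (h : R s = C.D t) :
    catOf C R s t = C.mul s t :=
  if_pos h

namespace Constellation

variable (C : Constellation Q) {e f s t u x y z xy yz : Q}

theorem D_D (x : Q) : C.D (C.D x) = C.D x := by
  obtain ⟨e, he, _⟩ := C.q1 (C.D x) (C.D x) x x x (C.q3_mul x) (C.q3_mul x)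
  obtain rfl : e = C.D x := C.q3_rid x _ _ he
  exact (C.q3_uniq _ _ (C.q3_rid x) he).symm

theorem isProj_iff : IsProj C e ↔ C.D e = e :=
  ⟨fun ⟨s, hs⟩ => hs ▸ C.D_D s, fun h => ⟨e, h⟩⟩

theorem eq_of_mul_proj (he : C.D e = e) (h : C.mul y e = some z) : z = y := by
  rw [← he] at h
  exact C.q3_rid e y z h

theorem mul_proj_eq_some (he : C.D e = e) (h : (C.mul s e).isSome) : C.mul s e = some s := by
  obtain ⟨z, hz⟩ := Option.isSome_iff_exists.mp h
  rw [hz, C.eq_of_mul_proj he hz]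

theorem mul_proj_self (he : C.D e = e) : C.mul e e = some e := by
  have h := C.q3_mul e
  rwa [he] at h

theorem mul_assoc_eq (hxy : C.mul x y = some xy) (hyz : C.mul y z = some yz) :
    C.mul x yz = C.mul xy z := by
  obtain ⟨w, hw⟩ := Option.isSome_iff_exists.mp (C.q2 x y z xy yz hxy hyz)
  obtain ⟨xy', hxy', hw'⟩ := C.q1 x y z yz w hyz hw
  rw [hxy, Option.some_inj] at hxy'
  rw [hw, hxy', hw']

theorem D_mul (h : C.mul x y = some xy) : C.D xy = C.D x := by
  have hD : C.mul (C.D x) xy = some xy := (C.mul_assoc_eq (C.q3_mul x) h).trans h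
  exact (C.q3_uniq _ _ (C.q3_rid x) hD).symm

theorem natle_proj_iff (he : C.D e = e) (hf : C.D f = f) :
    natle C e f ↔ (C.mul e f).isSome := by
  unfold natle
  rw [he]
  exact ⟨fun h => by rw [h]; rfl, C.mul_proj_eq_some hf⟩

theorem natle_refl (s : Q) : natle C s s := C.q3_mul s

theorem mul_D_of_natle (h : natle C s t) : C.mul (C.D s) (C.D t) = some (C.D s) := by
  obtain ⟨e, he, _⟩ := C.q1 _ _ _ _ _ (C.q3_mul t) h
  rwa [C.q3_rid t _ _ he] at he

theorem natle_D (h : natle C s t) : natle C (C.D s) (C.D t) := by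
  unfold natle
  rw [C.D_D]
  exact C.mul_D_of_natle h

theorem natle_trans (hst : natle C s t) (htu : natle C t u) : natle C s u :=
  (C.mul_assoc_eq (C.mul_D_of_natle hst) htu).symm.trans hst

theorem mul_restrict (he : C.D e = e) (h : natle C e (C.D s)) :
    C.mul e s = some (restrict C e s) := by
  unfold natle at h
  rw [he] at h
  obtain ⟨r, hr⟩ := Option.isSome_iff_exists.mp (C.q2 e (C.D s) s e s h (C.q3_mul s))
  rw [restrict, hr]
  rfl

theorem D_restrict (he : C.D e = e) (h : natle C e (C.D s)) : C.D (restrict C e s) = e := by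
  rw [C.D_mul (C.mul_restrict he h), he]

theorem restrict_natle (he : C.D e = e) (h : natle C e (C.D s)) : natle C (restrict C e s) s := by
  unfold natle
  rw [C.D_restrict he h]
  exact C.mul_restrict he h

theorem eq_restrict_of_natle (hx : natle C x s) (hD : C.D x = e) : x = restrict C e s := by
  unfold natle at hx
  rw [restrict, ← hD, hx]
  rfl

end Constellation

namespace PreRange

variable {C : Constellation Q} (PR : PreRange C) {a b c d e f s t x y z xy ac bd : Q}

theorem D_R (s : Q) : C.D (PR.R s) = PR.R s := (C.isProj_iff).mp (PR.proj s)

theorem mul_R (s : Q) : C.mul s (PR.R s) = some s := C.mul_proj_eq_some (PR.D_R s) (PR.ex s)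

theorem R_proj (he : C.D e = e) : PR.R e = e :=
  (PR.uniq e e ⟨e, he⟩ (by rw [C.mul_proj_self he]; rfl) fun _ _ h => h).symm

include PR in
theorem proj_antisymm (he : C.D e = e) (hf : C.D f = f)
    (hef : (C.mul e f).isSome) (hfe : (C.mul f e).isSome) : e = f := by
  have hfe' : C.mul f e = some f := C.mul_proj_eq_some he hfe
  have hf_R : f = PR.R e := by
    refine PR.uniq e f ⟨f, hf⟩ hef fun g hg heg => ?_
    rw [← C.mul_assoc_eq hfe' (C.mul_proj_eq_some ((C.isProj_iff).mp hg) heg), hfe']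
    rfl
  rw [hf_R, PR.R_proj he]

include PR in
theorem natle_antisymm (hst : natle C s t) (hts : natle C t s) : s = t := by
  have hD : C.D s = C.D t :=
    PR.proj_antisymm (C.D_D s) (C.D_D t)
      (by rw [C.mul_D_of_natle hst]; rfl) (by rw [C.mul_D_of_natle hts]; rfl)
  have h : C.mul (C.D s) t = some s := hst
  rwa [hD, C.q3_mul, Option.some_inj, eq_comm] at h

theorem mul_R_of_natle (h : natle C s t) : C.mul s (PR.R t) = some s :=
  (C.mul_assoc_eq h (PR.mul_R t)).symm.trans h

theorem natle_R (h : natle C s t) : natle C (PR.R s) (PR.R t) :=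
  (C.natle_proj_iff (PR.D_R s) (PR.D_R t)).mpr
    (PR.min s (PR.R t) (PR.proj t) (by rw [PR.mul_R_of_natle h]; rfl))

theorem mul_isSome_iff : (C.mul s t).isSome ↔ natle C (PR.R s) (C.D t) := by
  rw [C.natle_proj_iff (PR.D_R s) (C.D_D t)]
  constructor
  · intro h
    obtain ⟨u, hu⟩ := Option.isSome_iff_exists.mp h
    obtain ⟨e, he, _⟩ := C.q1 s (C.D t) t t u (C.q3_mul t) hu
    exact PR.min s (C.D t) ⟨t, rfl⟩ (by rw [he]; rfl)
  · intro h
    obtain ⟨r, hr⟩ := Option.isSome_iff_exists.mp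
      (C.q2 _ _ t _ t (C.mul_proj_eq_some (C.D_D t) h) (C.q3_mul t))
    rw [← C.mul_assoc_eq (PR.mul_R s) hr]
    exact C.q2 _ _ _ _ _ (PR.mul_R s) hr

theorem mul_isSome_of_R_eq_D (h : PR.R s = C.D t) : (C.mul s t).isSome :=
  PR.mul_isSome_iff.mpr (h ▸ C.natle_refl _)

theorem R_mul (hcong : RangeCongruence C PR) (h : PR.R x = C.D y) (hxy : C.mul x y = some xy) :
    PR.R xy = PR.R y :=
  (hcong x y xy y hxy (by rw [h]; exact C.q3_mul y)).symm

theorem natle_mul (hab : natle C a b) (hcd : natle C c d) (hac : PR.R a = C.D c)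
    (hac' : C.mul a c = some ac) (hbd : C.mul b d = some bd) : natle C ac bd := by
  have had : C.mul a d = some ac :=
    (C.mul_assoc_eq (hac ▸ PR.mul_R a) hcd).symm.trans hac'
  unfold natle
  rw [C.D_mul hac', C.mul_assoc_eq hab hbd, had]

theorem catOf_isSome_iff : (catOf C PR.R s t).isSome ↔ PR.R s = C.D t := by
  unfold catOf
  split_ifs with h
  · exact iff_of_true (PR.mul_isSome_of_R_eq_D h) h
  · exact iff_of_false (by simp) h

theorem eq_of_catOf_proj_left (he : C.D e = e) (h : catOf C PR.R e y = some z) : z = y := by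
  obtain ⟨hD, h⟩ := catOf_eq_some_iff.mp h
  rw [PR.R_proj he] at hD
  rw [hD, C.q3_mul, Option.some_inj] at h
  exact h.symm

theorem eq_of_catOf_proj_right (he : C.D e = e) (h : catOf C PR.R y e = some z) : z = y :=
  C.eq_of_mul_proj he (catOf_eq_some_iff.mp h).2

theorem catOf_assoc (hcong : RangeCongruence C PR) (x y z : Q) :
    (catOf C PR.R y z).bind (catOf C PR.R x) =
      (catOf C PR.R x y).bind fun xy => catOf C PR.R xy z := by
  refine Option.ext fun w => ?_
  simp only [Option.bind_eq_some_iff, catOf_eq_some_iff]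
  constructor
  · rintro ⟨yz, ⟨hyz, hyz'⟩, hx, hw⟩
    have hxy : PR.R x = C.D y := hx.trans (C.D_mul hyz')
    obtain ⟨xy, hxy'⟩ := Option.isSome_iff_exists.mp (PR.mul_isSome_of_R_eq_D hxy)
    exact ⟨xy, ⟨hxy, hxy'⟩, (PR.R_mul hcong hxy hxy').trans hyz,
      (C.mul_assoc_eq hxy' hyz').symm.trans hw⟩
  · rintro ⟨xy, ⟨hxy, hxy'⟩, hz, hw⟩
    have hyz : PR.R y = C.D z := (PR.R_mul hcong hxy hxy').symm.trans hz
    obtain ⟨yz, hyz'⟩ := Option.isSome_iff_exists.mp (PR.mul_isSome_of_R_eq_D hyz)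
    exact ⟨yz, ⟨hyz, hyz'⟩, hxy.trans (C.D_mul hyz').symm,
      (C.mul_assoc_eq hxy' hyz').trans hw⟩

end PreRange
noncomputable def Constellation.toOrderedCatRes (C : Constellation Q) (PR : PreRange C)
    (hcong : RangeCongruence C PR) : OrderedCatRes Q where
  comp := catOf C PR.R
  D := C.D
  R := PR.R
  c1 := PR.catOf_assoc hcong
  c2 x y z xy yz hxy hyz := by
    rw [PR.catOf_isSome_iff, C.D_mul (catOf_eq_some_iff.mp hyz).2]
    exact (catOf_eq_some_iff.mp hxy).1
  dId x := by rw [catOf_of_eq (PR.R_proj (C.D_D x)), C.q3_mul]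
  rId x := by rw [catOf_of_eq (PR.D_R x).symm, PR.mul_R]
  dL x _ _ := PR.eq_of_catOf_proj_left (C.D_D x)
  dR' x _ _ := PR.eq_of_catOf_proj_right (C.D_D x)
  rL x _ _ := PR.eq_of_catOf_proj_left (PR.D_R x)
  rR x _ _ := PR.eq_of_catOf_proj_right (PR.D_R x)
  defIff _ _ := PR.catOf_isSome_iff
  dD := C.D_D
  rD x := PR.R_proj (C.D_D x)
  dRx := PR.D_R
  rRx x := PR.R_proj (PR.D_R x)
  dComp _ _ _ h := C.D_mul (catOf_eq_some_iff.mp h).2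
  rComp _ _ _ h := PR.R_mul hcong (catOf_eq_some_iff.mp h).1 (catOf_eq_some_iff.mp h).2
  le := natle C
  le_refl := C.natle_refl
  le_antisymm _ _ := PR.natle_antisymm
  le_trans _ _ _ := C.natle_trans
  o1 _ _ _ _ _ _ hab hcd hac hbd :=
    PR.natle_mul hab hcd (catOf_eq_some_iff.mp hac).1 (catOf_eq_some_iff.mp hac).2
      (catOf_eq_some_iff.mp hbd).2
  o2 _ _ := C.natle_D
  o2' _ _ := PR.natle_R
  rstr := restrict C
  rstr_le _ _ := C.restrict_natle
  rstr_dom _ _ := C.D_restrict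
  rstr_uniq _ _ _ _ _ := C.eq_restrict_of_natle

namespace OrderedCatRes

variable (O : OrderedCatRes Q) {e f s t u w x y z xy yz : Q}

theorem comp_assoc (hxy : O.comp x y = some xy) (hyz : O.comp y z = some yz) :
    O.comp x yz = O.comp xy z := by
  simpa [hxy, hyz] using O.c1 x y z

theorem comp_eq_none (h : O.R x ≠ O.D y) : O.comp x y = none :=
  Option.not_isSome_iff_eq_none.mp (mt (O.defIff x y).mp h)

theorem rstr_D_self (t : Q) : O.rstr (O.D t) t = t :=
  (O.rstr_uniq _ t t (O.dD t) (O.le_refl _) (O.le_refl t) rfl).symm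

theorem rstr_of_le (he : O.D e = e) (hf : O.D f = f) (h : O.le e f) : O.rstr e f = e :=
  (O.rstr_uniq e f e he (by rwa [hf]) h he).symm

theorem rstr_rstr (he : O.D e = e) (hf : O.D f = f) (hef : O.le e f) (hfs : O.le f (O.D s)) :
    O.rstr e (O.rstr f s) = O.rstr e s := by
  have hD : O.le e (O.D (O.rstr f s)) := by rwa [O.rstr_dom f s hf hfs]
  exact O.rstr_uniq e s _ he (O.le_trans _ _ _ hef hfs)
    (O.le_trans _ _ _ (O.rstr_le e _ he hD) (O.rstr_le f s hf hfs)) (O.rstr_dom e _ he hD)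

theorem rstr_mono (he : O.D e = e) (hf : O.D f = f) (hef : O.le e f) (hfs : O.le f (O.D s)) :
    O.le (O.rstr e s) (O.rstr f s) := by
  rw [← O.rstr_rstr he hf hef hfs]
  exact O.rstr_le e _ he (by rwa [O.rstr_dom f s hf hfs])

theorem comp_rstr_isSome (h : O.le (O.R s) (O.D t)) :
    (O.comp s (O.rstr (O.R s) t)).isSome :=
  (O.defIff _ _).mpr (O.rstr_dom _ _ (O.dRx s) h).symm

theorem conOf_eq_some_iff :
    conOf O s t = some u ↔ O.le (O.R s) (O.D t) ∧ O.comp s (O.rstr (O.R s) t) = some u := by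
  unfold conOf
  split_ifs with h <;> simp [h]

theorem conOf_isSome_iff : (conOf O s t).isSome ↔ O.le (O.R s) (O.D t) := by
  unfold conOf
  split_ifs with h
  · exact iff_of_true (O.comp_rstr_isSome h) h
  · exact iff_of_false (by simp) h

theorem conOf_eq_comp (h : O.R s = O.D t) : conOf O s t = O.comp s t := by
  rw [conOf, if_pos (by rw [h]; exact O.le_refl _), h, rstr_D_self]

theorem D_conOf (h : conOf O s t = some u) : O.D u = O.D s :=
  O.dComp _ _ _ (O.conOf_eq_some_iff.mp h).2

theorem conOf_R_isSome (s : Q) : (conOf O s (O.R s)).isSome :=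
  O.conOf_isSome_iff.mpr (by rw [O.dRx]; exact O.le_refl _)

theorem conOf_D_self (x : Q) : conOf O (O.D x) x = some x := by
  rw [O.conOf_eq_comp (O.rD x), O.dId]

theorem eq_of_conOf_D (h : conOf O y (O.D x) = some z) : z = y := by
  obtain ⟨hle, hc⟩ := O.conOf_eq_some_iff.mp h
  rw [O.dD] at hle
  rw [O.rstr_of_le (O.dRx y) (O.dD x) hle, O.rId, Option.some_inj] at hc
  exact hc.symm

theorem rstr_conOf (he : O.D e = e) (hey : O.le e (O.D y)) (h : conOf O y z = some yz) :
    conOf O (O.rstr e y) z = some (O.rstr e yz) := by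
  obtain ⟨hyz, hc⟩ := O.conOf_eq_some_iff.mp h
  set a := O.rstr e y
  have ha : O.le a y := O.rstr_le e y he hey
  have hRa : O.le (O.R a) (O.R y) := O.o2' a y ha
  obtain ⟨b, hb⟩ :=
    Option.isSome_iff_exists.mp (O.conOf_isSome_iff.mpr (O.le_trans _ _ _ hRa hyz))
  have hba : O.le b yz :=
    O.o1 _ _ _ _ _ _ ha (O.rstr_mono (O.dRx a) (O.dRx y) hRa hyz)
      (O.conOf_eq_some_iff.mp hb).2 hc
  have hDb : O.D b = e := by rw [O.D_conOf hb, O.rstr_dom e y he hey]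
  rwa [O.rstr_uniq e yz b he (by rwa [O.D_conOf h]) hba hDb] at hb

theorem conOf_assoc (hyz : conOf O y z = some yz) (hw : conOf O x yz = some w) :
    ∃ xy, conOf O x y = some xy ∧ conOf O xy z = some w := by
  obtain ⟨hx, hc⟩ := O.conOf_eq_some_iff.mp hw
  have hxy : O.le (O.R x) (O.D y) := by rwa [O.D_conOf hyz] at hx
  set a := O.rstr (O.R x) y
  obtain ⟨hRa, ha⟩ := O.conOf_eq_some_iff.mp (O.rstr_conOf (O.dRx x) hxy hyz)
  obtain ⟨xy, hxa⟩ := Option.isSome_iff_exists.mp (O.comp_rstr_isSome hxy)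
  have hRxy : O.R xy = O.R a := O.rComp _ _ _ hxa
  refine ⟨xy, O.conOf_eq_some_iff.mpr ⟨hxy, hxa⟩,
    O.conOf_eq_some_iff.mpr ⟨by rwa [hRxy], ?_⟩⟩
  rw [hRxy, ← O.comp_assoc hxa ha, hc]

noncomputable def toConstellation : Constellation Q where
  mul := conOf O
  D := O.D
  q1 _ _ _ _ _ := O.conOf_assoc
  q2 _ _ _ _ _ hxy hyz := by
    rw [O.conOf_isSome_iff, O.D_conOf hyz]
    exact (O.conOf_eq_some_iff.mp hxy).1
  q3_rid _ _ _ := O.eq_of_conOf_D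
  q3_mul := O.conOf_D_self
  q3_uniq x e hrid hex := by
    rw [O.dComp _ _ _ (O.conOf_eq_some_iff.mp hex).2]
    exact hrid _ _ (O.conOf_D_self e)

noncomputable def toPreRange : PreRange O.toConstellation where
  R := O.R
  proj s := ⟨O.R s, O.dRx s⟩
  ex := O.conOf_R_isSome
  min s _ _ h := O.conOf_isSome_iff.mpr (by rw [O.rRx]; exact O.conOf_isSome_iff.mp h)
  uniq s e he hse hmin := by
    have he' : O.D e = e := (O.toConstellation.isProj_iff).mp he
    have hse' : O.le (O.R s) e := by rw [← he']; exact O.conOf_isSome_iff.mp hse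
    have hes := O.conOf_isSome_iff.mp (hmin (O.R s) ⟨O.R s, O.dRx s⟩ (O.conOf_R_isSome s))
    rw [← he', O.rD, he', O.dRx] at hes
    exact O.le_antisymm _ _ hes hse'

theorem rangeCongruence_toPreRange : RangeCongruence O.toConstellation O.toPreRange := by
  intro s t u v hu (hv : conOf O (O.R s) t = some v)
  obtain ⟨-, hcu⟩ := O.conOf_eq_some_iff.mp hu
  obtain ⟨-, hcv⟩ := O.conOf_eq_some_iff.mp hv
  rw [O.rRx] at hcv
  change O.R v = O.R u
  rw [O.rL s _ _ hcv, O.rComp _ _ _ hcu]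

theorem natle_toConstellation_iff : natle O.toConstellation s t ↔ O.le s t := by
  change conOf O (O.D s) t = some s ↔ _
  rw [O.conOf_eq_some_iff, O.rD]
  constructor
  · rintro ⟨hle, hc⟩
    rw [O.dL s _ _ hc]
    exact O.rstr_le _ _ (O.dD s) hle
  · intro h
    have hD := O.o2 s t h
    rw [← O.rstr_uniq _ _ _ (O.dD s) hD h rfl, O.dId]
    exact ⟨hD, rfl⟩

theorem catOf_eq_comp {C : Constellation Q} {R : Q → Q} (hmul : C.mul = conOf O)
    (hD : C.D = O.D) (hR : R = O.R) : catOf C R = O.comp := by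
  subst hR
  funext s t
  unfold catOf
  rw [hmul, hD]
  split_ifs with h
  · exact O.conOf_eq_comp h
  · exact (O.comp_eq_none h).symm

end OrderedCatRes

theorem PreRange.conOf_eq_mul {C : Constellation Q} (PR : PreRange C) {O : OrderedCatRes Q}
    (hcomp : O.comp = catOf C PR.R) (hD : O.D = C.D) (hR : O.R = PR.R) (hle : O.le = natle C)
    (hrstr : ∀ e s, IsProj C e → natle C e (C.D s) → C.mul e s = some (O.rstr e s)) :
    conOf O = C.mul := by
  funext s t
  unfold conOf
  rw [hcomp, hD, hR, hle]
  split_ifs with h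
  · have hr := hrstr _ t (PR.proj s) h
    rw [catOf_of_eq ((C.D_mul hr).trans (PR.D_R s)).symm, C.mul_assoc_eq (PR.mul_R s) hr]
  · exact (Option.not_isSome_iff_eq_none.mp (mt PR.mul_isSome_iff.mp h)).symm

/-- the correspondence between constellations with range and ordered
categories with restrictions, and its two directions are mutually inverse. -/
theorem stmt8 :
    -- a constellation with range yields an ordered category with restrictions
    (∀ (C : Constellation Q) (PR : PreRange C),
      (∀ s t u v, C.mul s t = some u → C.mul (PR.R s) t = some v →
        PR.R v = PR.R u) →
      ∃ O : OrderedCatRes Q, O.comp = catOf C PR.R ∧ O.D = C.D ∧ O.R = PR.R ∧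
        O.le = natle C ∧
        (∀ e s, IsProj C e → natle C e (C.D s) → C.mul e s = some (O.rstr e s))) ∧
    -- an ordered category with restrictions yields a constellation with range
    (∀ O : OrderedCatRes Q,
      ∃ C : Constellation Q, C.mul = conOf O ∧ C.D = O.D ∧
        ∃ PR : PreRange C, PR.R = O.R ∧
          (∀ s t u v, C.mul s t = some u → C.mul (PR.R s) t = some v →
            PR.R v = PR.R u) ∧
          (∀ s t, natle C s t ↔ O.le s t)) ∧
    -- round trip: category → constellation → category
    (∀ (O : OrderedCatRes Q) (C : Constellation Q) (PR : PreRange C),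
      C.mul = conOf O → C.D = O.D → PR.R = O.R → catOf C PR.R = O.comp) ∧
    -- round trip: constellation → category → constellation
    (∀ (C : Constellation Q) (PR : PreRange C) (O : OrderedCatRes Q),
      O.comp = catOf C PR.R → O.D = C.D → O.R = PR.R → O.le = natle C →
      (∀ e s, IsProj C e → natle C e (C.D s) → C.mul e s = some (O.rstr e s)) →
      conOf O = C.mul) := by
  refine ⟨fun C PR hcong => ?_, fun O => ?_, fun O C PR => O.catOf_eq_comp,
    fun C PR O => PR.conOf_eq_mul⟩
  · exact ⟨C.toOrderedCatRes PR hcong, rfl, rfl, rfl, rfl,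
      fun e s he => C.mul_restrict ((C.isProj_iff).mp he)⟩
  · exact ⟨O.toConstellation, rfl, rfl, O.toPreRange, rfl, O.rangeCongruence_toPreRange,
      fun s t => O.natle_toConstellation_iff⟩

end ConstellationsRange
end

section
/- Let C be an IS-category. C has well-founded subobjects (for monomorphisms a,b with R(a) = R(b), a ∼ b iff i_a = i_b, where ∼ is mutual factorization-through) if and only if every monomorphism of C lying in S_C is an isomorphism. In that case, for monomorphisms a,b with R(a) = R(b), a factors through b if and only if R(s_a) ≤_I R(s_b). -/
namespace ConstellationsRange
open Classical

variable {Q : Type*}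

/-- An IS-category: a category with subcategories of insertions and surjections,
with unique factorization of every element as a surjection followed by an insertion. -/
structure ISCat (Q : Type*) extends PCat Q where
  I : Set Q
  S : Set Q
  subI : ∀ i j k, i ∈ I → j ∈ I → comp i j = some k → k ∈ I
  subS : ∀ i j k, i ∈ S → j ∈ S → comp i j = some k → k ∈ S
  idI : ∀ x, D x ∈ I
  idS : ∀ x, D x ∈ S
  /-- (IS1) at most one insertion between a pair of identities, in either direction. -/
  is1 : ∀ i j, i ∈ I → j ∈ I →
      ((D i = D j ∧ R i = R j) ∨ (D i = R j ∧ R i = D j)) → i = j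
  /-- (IS2) existence of the factorization `a = s_a ∘ i_a`. -/
  fac : ∀ a, ∃ s i, s ∈ S ∧ i ∈ I ∧ comp s i = some a
  /-- (IS2) uniqueness of the factorization. -/
  facUniq : ∀ a s i s' i', s ∈ S → i ∈ I → s' ∈ S → i' ∈ I →
      comp s i = some a → comp s' i' = some a → s = s' ∧ i = i'

/-- `a` factors through `b`: `a = x∘b` for some `x`. -/
def fle (C : ISCat Q) (a b : Q) : Prop := ∃ x, C.comp x b = some a

/-- The I-order on identities: there is an insertion from `e` to `f`. -/
def idleI (C : ISCat Q) (e f : Q) : Prop := ∃ i ∈ C.I, C.D i = e ∧ C.R i = f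

/-- `C` has well-founded subobjects: monomorphisms `a,b` with equal range mutually
factor through each other iff the insertion parts of their factorizations agree. -/
def WellFoundedSubobjects (C : ISCat Q) : Prop :=
  ∀ a b sa ia sb ib, Mono C.toPCat a → Mono C.toPCat b → C.R a = C.R b →
    sa ∈ C.S → ia ∈ C.I → C.comp sa ia = some a →
    sb ∈ C.S → ib ∈ C.I → C.comp sb ib = some b →
    ((fle C a b ∧ fle C b a) ↔ ia = ib)

/-- Associativity in the convenient equational form. -/
lemma assoc1 (C : PCat Q) {x y z u v : Q} (h1 : C.comp x y = some u)
    (h2 : C.comp y z = some v) : C.comp x v = C.comp u z := by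
  have h := C.c1 x y z
  rw [h1, h2] at h
  simpa using h

lemma compD (C : PCat Q) {x y w : Q} (h : C.comp x y = some w) : C.R x = C.D y :=
  (C.defIff x y).mp (by rw [h]; rfl)

lemma compEx (C : PCat Q) {x y : Q} (h : C.R x = C.D y) : ∃ w, C.comp x y = some w :=
  Option.isSome_iff_exists.mp ((C.defIff x y).mpr h)

/-- If `s ∘ i = a` and `a` is mono, then `s` is mono. -/
lemma mono_left (C : PCat Q) {s i a : Q} (h : C.comp s i = some a)
    (hm : Mono C a) : Mono C s := by
  intro x y w hx hy
  have hRw : C.R w = C.D i := by rw [C.rComp _ _ _ hx]; exact compD C h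
  obtain ⟨w', hw'⟩ := compEx C hRw
  exact hm x y w' (by rw [assoc1 C hx h]; exact hw') (by rw [assoc1 C hy h]; exact hw')

/-- Identities are mono. -/
lemma mono_id (C : PCat Q) (m : Q) : Mono C (C.R m) := by
  intro x y w hx hy
  rw [← C.rR m x w hx, ← C.rR m y w hy]

/-- If `a` factors through `b`, then there is an insertion `j : R s_a → R s_b`
with `j ∘ i_b = i_a`. -/
lemma fleJ (C : ISCat Q) {a b sa ia sb ib : Q}
    (hsa : sa ∈ C.S) (hia : ia ∈ C.I) (hfa : C.comp sa ia = some a)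
    (hsb : sb ∈ C.S) (hib : ib ∈ C.I) (hfb : C.comp sb ib = some b)
    (h : fle C a b) :
    ∃ j ∈ C.I, C.D j = C.R sa ∧ C.R j = C.R sb ∧ C.comp j ib = some ia := by
  obtain ⟨x, hx⟩ := h
  have hRx : C.R x = C.D sb :=
    (compD C.toPCat hx).trans (C.dComp _ _ _ hfb)
  obtain ⟨u, hu⟩ := compEx C.toPCat hRx
  have hua : C.comp u ib = some a := by
    rw [← assoc1 C.toPCat hu hfb]; exact hx
  obtain ⟨s', i', hs', hi', hfu⟩ := C.fac u
  have hRi' : C.R i' = C.D ib :=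
    (C.rComp _ _ _ hfu).symm.trans (compD C.toPCat hua)
  obtain ⟨k, hk⟩ := compEx C.toPCat hRi'
  have hkI : k ∈ C.I := C.subI _ _ _ hi' hib hk
  have hs'a : C.comp s' k = some a := by
    rw [assoc1 C.toPCat hfu hk]; exact hua
  obtain ⟨hse, hie⟩ := C.facUniq a sa ia s' k hsa hia hs' hkI hfa hs'a
  refine ⟨i', hi', ?_, hRi'.trans (compD C.toPCat hfb).symm, ?_⟩
  · rw [hse]; exact (compD C.toPCat hfu).symm
  · rw [hie]; exact hk

/-- If every mono in `S` is iso, an insertion `R s_a → R s_b` yields `fle a b`. -/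
lemma fleOf (C : ISCat Q) (HS : ∀ m ∈ C.S, Mono C.toPCat m → Iso C.toPCat m)
    {a b sa ia sb ib : Q} (hmb : Mono C.toPCat b) (hrab : C.R a = C.R b)
    (hsa : sa ∈ C.S) (hia : ia ∈ C.I) (hfa : C.comp sa ia = some a)
    (hsb : sb ∈ C.S) (hib : ib ∈ C.I) (hfb : C.comp sb ib = some b)
    (h : idleI C (C.R sa) (C.R sb)) : fle C a b := by
  obtain ⟨j, hjI, hjD, hjR⟩ := h
  have hmsb : Mono C.toPCat sb := mono_left C.toPCat hfb hmb
  obtain ⟨t, ht1, ht2⟩ := HS sb hsb hmsb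
  have hDt : C.R sb = C.D t := compD C.toPCat ht1
  have hDib : C.D ib = C.R sb := (compD C.toPCat hfb).symm
  obtain ⟨k, hk⟩ := compEx C.toPCat (show C.R j = C.D ib from hjR.trans hDib.symm)
  have hkI : k ∈ C.I := C.subI _ _ _ hjI hib hk
  have hia_eq : ia = k := by
    refine C.is1 ia k hia hkI (Or.inl ⟨?_, ?_⟩)
    · rw [← compD C.toPCat hfa, C.dComp _ _ _ hk, hjD]
    · rw [← C.rComp _ _ _ hfa, C.rComp _ _ _ hk, ← C.rComp _ _ _ hfb, ← hrab]
  obtain ⟨x, hx⟩ := compEx C.toPCat hjD.symm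
  have hxia : C.comp x ib = some a := by
    rw [← assoc1 C.toPCat hx hk, ← hia_eq]; exact hfa
  obtain ⟨y, hy⟩ := compEx C.toPCat
    (show C.R x = C.D t from ((C.rComp _ _ _ hx).trans hjR).trans hDt)
  have htb : C.comp t b = some ib := by
    rw [assoc1 C.toPCat ht2 hfb,
      show C.D t = C.D ib from hDt.symm.trans hDib.symm]
    exact C.dId ib
  exact ⟨y, by rw [← assoc1 C.toPCat hy htb]; exact hxia⟩

/-- an IS-category has well-founded subobjects iff every monomorphism
lying in `S_C` is an isomorphism; and in that case, for monomorphisms `a,b` with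
`R a = R b`, `a` factors through `b` iff `R(s_a) ≤_I R(s_b)`. -/
theorem stmt19 (C : ISCat Q) :
    (WellFoundedSubobjects C ↔ (∀ m ∈ C.S, Mono C.toPCat m → Iso C.toPCat m)) ∧
    ((∀ m ∈ C.S, Mono C.toPCat m → Iso C.toPCat m) →
      ∀ a b sa ia sb ib, Mono C.toPCat a → Mono C.toPCat b → C.R a = C.R b →
        sa ∈ C.S → ia ∈ C.I → C.comp sa ia = some a →
        sb ∈ C.S → ib ∈ C.I → C.comp sb ib = some b →
        (fle C a b ↔ idleI C (C.R sa) (C.R sb))) := by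
  have part2 : (∀ m ∈ C.S, Mono C.toPCat m → Iso C.toPCat m) →
      ∀ a b sa ia sb ib, Mono C.toPCat a → Mono C.toPCat b → C.R a = C.R b →
        sa ∈ C.S → ia ∈ C.I → C.comp sa ia = some a →
        sb ∈ C.S → ib ∈ C.I → C.comp sb ib = some b →
        (fle C a b ↔ idleI C (C.R sa) (C.R sb)) := by
    intro HS a b sa ia sb ib hma hmb hrab hsa hia hfa hsb hib hfb
    constructor
    · intro h
      obtain ⟨j, hjI, hjD, hjR, _⟩ := fleJ C hsa hia hfa hsb hib hfb h
      exact ⟨j, hjI, hjD, hjR⟩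
    · exact fleOf C HS hmb hrab hsa hia hfa hsb hib hfb
  refine ⟨⟨?_, ?_⟩, part2⟩
  · -- well-founded subobjects implies every mono in S is iso
    intro WFS m hmS hmono
    have hRmI : C.R m ∈ C.I := by rw [← C.dRx m]; exact C.idI (C.R m)
    have hRmS : C.R m ∈ C.S := by rw [← C.dRx m]; exact C.idS (C.R m)
    have hfm : C.comp m (C.R m) = some m := C.rId m
    have hfRm : C.comp (C.R m) (C.R m) = some (C.R m) := by
      have h := C.dId (C.R m); rwa [C.dRx m] at h
    have hwfs := WFS m (C.R m) m (C.R m) (C.R m) (C.R m) hmono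
      (mono_id C.toPCat m) (C.rRx m).symm hmS hRmI hfm hRmS hRmI hfRm
    obtain ⟨_, x, hx⟩ := hwfs.mpr rfl
    have hDx : C.D x = C.R m := by rw [← C.dComp _ _ _ hx, C.dRx]
    obtain ⟨w, hw⟩ := compEx C.toPCat hDx.symm
    have hwm : C.comp w m = some m := by
      rw [← assoc1 C.toPCat hw hx]; exact C.rId m
    have hwD : w = C.D m := hmono w (C.D m) m hwm (C.dId m)
    exact ⟨x, by rw [← hwD]; exact hw, by rw [hDx]; exact hx⟩
  · -- every mono in S being iso implies well-founded subobjects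
    intro HS a b sa ia sb ib hma hmb hrab hsa hia hfa hsb hib hfb
    constructor
    · rintro ⟨hab, hba⟩
      obtain ⟨j, hjI, hjD, hjR, hjib⟩ := fleJ C hsa hia hfa hsb hib hfb hab
      obtain ⟨k, hkI, hkD, hkR, _⟩ := fleJ C hsb hib hfb hsa hia hfa hba
      have hjk : j = k :=
        C.is1 j k hjI hkI (Or.inr ⟨hjD.trans hkR.symm, hjR.trans hkD.symm⟩)
      have hsab : C.R sa = C.R sb := by rw [← hjD, hjk, hkD]
      have hRsaI : C.R sa ∈ C.I := by rw [compD C.toPCat hfa]; exact C.idI ia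
      have hje : j = C.R sa := C.is1 j (C.R sa) hjI hRsaI
        (Or.inl ⟨hjD.trans (C.dRx sa).symm,
          hjR.trans (hsab.symm.trans (C.rRx sa).symm)⟩)
      have hDib : C.D ib = C.R sa := (compD C.toPCat hfb).symm.trans hsab.symm
      have hkey : C.comp (C.D ib) ib = some ia := by rw [hDib, ← hje]; exact hjib
      exact Option.some.inj (hkey.symm.trans (C.dId ib))
    · intro hiaib
      have hsab : C.R sa = C.R sb := by
        rw [compD C.toPCat hfa, compD C.toPCat hfb, hiaib]
      have hRsaI : C.R sa ∈ C.I := by rw [compD C.toPCat hfa]; exact C.idI ia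
      have hRsbI : C.R sb ∈ C.I := by rw [compD C.toPCat hfb]; exact C.idI ib
      exact ⟨fleOf C HS hmb hrab hsa hia hfa hsb hib hfb
          ⟨C.R sa, hRsaI, C.dRx sa, (C.rRx sa).trans hsab⟩,
        fleOf C HS hma hrab.symm hsb hib hfb hsa hia hfa
          ⟨C.R sb, hRsbI, C.dRx sb, (C.rRx sb).trans hsab.symm⟩⟩

end ConstellationsRange
end
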